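/- The generalized Jacobi–Trudi formula holds: $^n s_\lambda(x_1,\dots,x_n|y) = \det\left[h_{\lambda_i+j-i}(x_1,\dots,x_n|\tau^{j-1}y)\right]_{i,j=1}^n$, where $h_p(x_1,\dots,x_n|y)=\sum_{1\le i_1\le\dots\le i_p\le n}(x_{i_1}-y_{i_1})(x_{i_2}-y_{i_2+1})\cdots(x_{i_p}-y_{i_p+p-1})$ for $p\ge 1$, $h_0=1$, and $h_p=0$ for $p<0$. -/

import Mathlib

/-!
For distinct `x_i` in a field, partial fractions give
`h_p(x|y) = ∑_k (x_k|y)^{p+n-1} / ∏_{l ≠ k} (x_k - x_l)` for every integer `p` with `p + n ≥ 1`: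
both sides satisfy the same recursion in `n` and `p`, and the base case is the Lagrange formula for
the leading coefficient of the interpolant. Since `(x|τ^j y)^{j+e} = (x|τ^j y)^j (x|y)^e`, the
matrix `[h_{λ_i+j-i}(x|τ^j y)]` factors as `A_λᵀ B` with `A_λ = [(x_i|y)^{λ_j+n-j}]` and `B`
independent of `λ`. For `λ = 0` the left side is unitriangular, so `det A_0 · det B = 1`, and the
identity follows. The general case is the specialisation of the case of indeterminates, which
lives in the fraction field of `ℤ[x, y]`.
-/

open Finset

/-- Generalized factorial power `(x|y)^p = ∏_{j=1}^p (x - y_j)`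
for a doubly infinite sequence `y`. -/
def gfp {R : Type*} [CommRing R] (y : ℤ → R) (x : R) (p : ℕ) : R :=
  ∏ j ∈ Finset.range p, (x - y ((j : ℤ) + 1))

/-- Numerator determinant `det [(x_i|y)^{λ_j + n - j}]` (indices `i j : Fin n`, zero-based,
so the 1-based exponent `λ_j + n - j` becomes `λ_j + n - (j+1)`). -/
def dnum {R : Type*} [CommRing R] (n : ℕ) (x : Fin n → R) (y : ℤ → R) (l : Fin n → ℕ) : R :=
  Matrix.det (Matrix.of fun i j : Fin n => gfp y (x i) (l j + n - ((j : ℕ) + 1)))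

/-- Denominator determinant `det [(x_i|y)^{n-j}]`. -/
def dden {R : Type*} [CommRing R] (n : ℕ) (x : Fin n → R) (y : ℤ → R) : R :=
  dnum n x y fun _ => 0

/-- The double complete homogeneous function
`h_p(x_1,…,x_m|y) = ∑_{1 ≤ i_1 ≤ … ≤ i_p ≤ m} ∏_{j=1}^p (x_{i_j} - y_{i_j + j - 1})`
(zero-based indexing of the variables and of `j`). -/
def dh {R : Type*} [CommRing R] (m p : ℕ) (x : Fin m → R) (y : ℤ → R) : R :=
  ∑ f ∈ Finset.univ.filter (fun f : Fin p → Fin m => ∀ a b : Fin p, a ≤ b → f a ≤ f b),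
    ∏ j : Fin p, (x (f j) - y (((f j : ℕ) : ℤ) + ((j : ℕ) : ℤ) + 1))

/-- `h_p` extended to integer `p`, with `h_p = 0` for `p < 0`. -/
def dhZ {R : Type*} [CommRing R] (m : ℕ) (p : ℤ) (x : Fin m → R) (y : ℤ → R) : R :=
  if 0 ≤ p then dh m p.toNat x y else 0

theorem mem_filter_monotone_iff {p m : ℕ} (f : Fin p → Fin m) :
    f ∈ univ.filter (fun f : Fin p → Fin m => ∀ a b : Fin p, a ≤ b → f a ≤ f b) ↔ Monotone f := by
  simp [Monotone]

theorem monotone_snoc_last_iff {p m : ℕ} (g : Fin p → Fin (m + 1)) :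
    Monotone (Fin.snoc g (Fin.last m) : Fin (p + 1) → Fin (m + 1)) ↔ Monotone g := by
  refine ⟨fun h a b hab => by simpa using h (Fin.castSucc_le_castSucc_iff.mpr hab),
    fun h a b hab => ?_⟩
  rcases Fin.eq_castSucc_or_eq_last b with ⟨b, rfl⟩ | rfl
  · obtain ⟨a, rfl⟩ := Fin.exists_castSucc_eq.mpr (hab.trans_lt (Fin.castSucc_lt_last b)).ne
    simpa using h (Fin.castSucc_le_castSucc_iff.mp hab)
  · simp [Fin.le_last]

section CommRing
variable {R : Type*} [CommRing R]

theorem dh_zero (m : ℕ) (x : Fin m → R) (y : ℤ → R) : dh m 0 x y = 1 := by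
  simp [dh]

theorem dh_zero_succ (p : ℕ) (x : Fin 0 → R) (y : ℤ → R) : dh 0 (p + 1) x y = 0 := by
  simp [dh]

theorem dh_succ_succ (m p : ℕ) (x : Fin (m + 1) → R) (y : ℤ → R) :
    dh (m + 1) (p + 1) x y =
      dh (m + 1) p x y * (x (Fin.last m) - y (m + p + 1)) + dh m (p + 1) (x ∘ Fin.castSucc) y := by
  rw [dh, ← sum_filter_add_sum_filter_not _ (fun f => f (Fin.last p) = Fin.last m)]
  congr 1
  · rw [dh, sum_mul]
    symm
    refine sum_nbij' (fun g => Fin.snoc g (Fin.last m)) (fun f => f ∘ Fin.castSucc) ?_ ?_ ?_ ?_ ?_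
    · intro g hg
      rw [mem_filter_monotone_iff] at hg
      rw [mem_filter, mem_filter_monotone_iff]
      exact ⟨(monotone_snoc_last_iff g).mpr hg, by simp⟩
    · intro f hf
      rw [mem_filter, mem_filter_monotone_iff] at hf
      exact (mem_filter_monotone_iff _).mpr (hf.1.comp Fin.strictMono_castSucc.monotone)
    · intro g _
      simp
    · intro f hf
      ext j : 1
      rcases Fin.eq_castSucc_or_eq_last j with ⟨j, rfl⟩ | rfl <;> simp [(mem_filter.mp hf).2]
    · intro g _
      simp [Fin.prod_univ_castSucc]
  · rw [dh]
    symm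
    refine sum_bij (fun g _ => Fin.castSucc ∘ g) ?_ ?_ ?_ ?_
    · intro g hg
      rw [mem_filter_monotone_iff] at hg
      rw [mem_filter, mem_filter_monotone_iff]
      exact ⟨Fin.strictMono_castSucc.monotone.comp hg, (Fin.castSucc_lt_last _).ne⟩
    · intro g _ g' _ h
      exact funext fun j => Fin.castSucc_injective _ (congrFun h j)
    · intro f hf
      rw [mem_filter, mem_filter_monotone_iff] at hf
      have hlt j : f j ≠ Fin.last m :=
        ((hf.1 (Fin.le_last j)).trans_lt (lt_of_le_of_ne (Fin.le_last _) hf.2)).ne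
      refine ⟨fun j => (f j).castPred (hlt j), ?_, funext fun j => by simp⟩
      rw [mem_filter_monotone_iff]
      exact fun a b hab => Fin.castPred_le_castPred_iff.mpr (hf.1 hab)
    · intro g _
      simp

theorem dhZ_of_neg {m : ℕ} {p : ℤ} (hp : p < 0) (x : Fin m → R) (y : ℤ → R) : dhZ m p x y = 0 :=
  if_neg (not_le.mpr hp)

theorem dhZ_succ (m : ℕ) (p : ℤ) (x : Fin (m + 1) → R) (y : ℤ → R) :
    dhZ (m + 1) (p + 1) x y =
      dhZ (m + 1) p x y * (x (Fin.last m) - y (m + p + 1)) +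
        dhZ m (p + 1) (x ∘ Fin.castSucc) y := by
  rcases lt_trichotomy p (-1) with hp | rfl | hp
  · simp [dhZ_of_neg, hp.trans (show (-1 : ℤ) < 0 by norm_num), show p + 1 < 0 by omega]
  · simp [dhZ, dh_zero]
  · lift p to ℕ using by omega
    simpa only [dhZ, Int.toNat_natCast, ← Nat.cast_add_one, Nat.cast_nonneg, if_true]
      using dh_succ_succ m p x y

theorem gfp_succ (y : ℤ → R) (t : R) (p : ℕ) : gfp y t (p + 1) = gfp y t p * (t - y (p + 1)) :=
  prod_range_succ _ _

theorem gfp_shift_add (y : ℤ → R) (t : R) (j e : ℕ) :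
    gfp (fun k => y (k - j)) t (j + e) = gfp (fun k => y (k - j)) t j * gfp y t e := by
  rw [gfp, prod_range_add]
  congr 1
  refine prod_congr rfl fun s _ => ?_
  push_cast
  ring_nf

def jacobiTrudiMatrix (n : ℕ) (x : Fin n → R) (y : ℤ → R) (l : Fin n → ℕ) :
    Matrix (Fin n) (Fin n) R :=
  Matrix.of fun i j => dhZ n ((l i : ℤ) + (j : ℕ) - (i : ℕ)) x (fun k => y (k - (j : ℕ)))

theorem det_jacobiTrudiMatrix_zero (n : ℕ) (x : Fin n → R) (y : ℤ → R) :
    (jacobiTrudiMatrix n x y fun _ => 0).det = 1 := by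
  rw [Matrix.det_of_isUpperTriangular]
  · simp [jacobiTrudiMatrix, dhZ, dh_zero]
  · intro i j hji
    exact dhZ_of_neg (by simpa using Fin.lt_def.mp hji) _ _

variable {S : Type*} [CommRing S] (φ : R →+* S)

theorem map_gfp (y : ℤ → R) (t : R) (p : ℕ) : φ (gfp y t p) = gfp (φ ∘ y) (φ t) p := by
  simp [gfp]

theorem map_dhZ (m : ℕ) (p : ℤ) (x : Fin m → R) (y : ℤ → R) :
    φ (dhZ m p x y) = dhZ m p (φ ∘ x) (φ ∘ y) := by
  unfold dhZ dh
  split_ifs <;> simp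

theorem map_dnum (n : ℕ) (x : Fin n → R) (y : ℤ → R) (l : Fin n → ℕ) :
    φ (dnum n x y l) = dnum n (φ ∘ x) (φ ∘ y) l := by
  rw [dnum, dnum, RingHom.map_det]
  congr 1
  ext i j
  simp [map_gfp]

theorem map_dden (n : ℕ) (x : Fin n → R) (y : ℤ → R) :
    φ (dden n x y) = dden n (φ ∘ x) (φ ∘ y) :=
  map_dnum φ n x y _

theorem map_det_jacobiTrudiMatrix (n : ℕ) (x : Fin n → R) (y : ℤ → R) (l : Fin n → ℕ) :
    φ (jacobiTrudiMatrix n x y l).det = (jacobiTrudiMatrix n (φ ∘ x) (φ ∘ y) l).det := by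
  rw [RingHom.map_det]
  congr 1
  ext i j
  simp [jacobiTrudiMatrix, map_dhZ, Function.comp_def]

end CommRing

section Field
variable {K : Type*} [Field K]
open Lagrange
open scoped Matrix

theorem nodalWeight_castSucc {m : ℕ} (x : Fin (m + 1) → K) (i : Fin m) :
    nodalWeight univ x i.castSucc =
      nodalWeight univ (x ∘ Fin.castSucc) i * (x i.castSucc - x (Fin.last m))⁻¹ := by
  simp only [nodalWeight, ← filter_ne', prod_filter, Fin.prod_univ_castSucc, Function.comp_apply,
    Fin.castSucc_inj, (Fin.castSucc_lt_last i).ne', ne_eq, not_false_eq_true, if_true]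

theorem sum_nodalWeight_mul_gfp_succ {m : ℕ} {x : Fin (m + 1) → K} (hx : Function.Injective x)
    (y : ℤ → K) (q : ℕ) :
    ∑ k, nodalWeight univ x k * gfp y (x k) (q + 1) =
      (x (Fin.last m) - y (q + 1)) * ∑ k, nodalWeight univ x k * gfp y (x k) q +
        ∑ i, nodalWeight univ (x ∘ Fin.castSucc) i * gfp y (x i.castSucc) q := by
  have hsplit k : nodalWeight univ x k * gfp y (x k) (q + 1) =
      (x (Fin.last m) - y (q + 1)) * (nodalWeight univ x k * gfp y (x k) q) +
        nodalWeight univ x k * (x k - x (Fin.last m)) * gfp y (x k) q := by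
    rw [gfp_succ]; ring
  rw [sum_congr rfl fun k _ => hsplit k, sum_add_distrib, mul_sum]
  congr 1
  rw [Fin.sum_univ_castSucc, sub_self, mul_zero, zero_mul, add_zero]
  refine sum_congr rfl fun i _ => ?_
  have hne : x i.castSucc - x (Fin.last m) ≠ 0 :=
    sub_ne_zero.mpr (hx.ne (Fin.castSucc_lt_last i).ne)
  rw [nodalWeight_castSucc]
  field_simp

theorem sum_nodalWeight {m : ℕ} {x : Fin (m + 1) → K} (hx : Function.Injective x) :
    ∑ k, nodalWeight univ x k = if m = 0 then 1 else 0 := by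
  have h := coeff_eq_sum (s := univ) hx.injOn (P := 1)
    (by rw [Polynomial.degree_one, card_univ, Fintype.card_fin]; exact_mod_cast m.succ_pos)
  simpa [Polynomial.coeff_one, eq_comm, nodalWeight, prod_inv_distrib] using h

theorem dhZ_eq_sum_nodalWeight_mul_gfp (y : ℤ → K) {m : ℕ} {x : Fin m → K}
    (hx : Function.Injective x) (q : ℕ) :
    dhZ m (q + 1 - m) x y = ∑ k, nodalWeight univ x k * gfp y (x k) q := by
  induction m generalizing q with
  | zero =>
    rw [univ_eq_empty, sum_empty, Nat.cast_zero, sub_zero, ← Nat.cast_add_one, dhZ,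
      if_pos (Nat.cast_nonneg _), Int.toNat_natCast, dh_zero_succ]
  | succ m ih =>
    induction q with
    | zero =>
      simp only [gfp, range_zero, prod_empty, mul_one, sum_nodalWeight hx]
      rcases m with _ | m
      · simp [dhZ, dh_zero]
      · exact dhZ_of_neg (by push_cast; omega) x y
    | succ q ihq =>
      have hrest := ih (hx.comp (Fin.castSucc_injective m)) q
      simp only [Function.comp_apply] at hrest
      rw [Nat.cast_add_one, show (q : ℤ) + 1 + 1 - (m + 1 : ℕ) = q + 1 - (m + 1 : ℕ) + 1 by ring,
        dhZ_succ, sum_nodalWeight_mul_gfp_succ hx, ← ihq, ← hrest,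
        show (q : ℤ) + 1 - (m + 1 : ℕ) + 1 = q + 1 - m by push_cast; ring,
        show (m : ℤ) + (q + 1 - (m + 1 : ℕ)) + 1 = q + 1 by push_cast; ring]
      ring

theorem exists_jacobiTrudiMatrix_eq_transpose_mul {n : ℕ} {x : Fin n → K}
    (hx : Function.Injective x) (y : ℤ → K) :
    ∃ B : Matrix (Fin n) (Fin n) K, ∀ l, jacobiTrudiMatrix n x y l =
      (Matrix.of fun i j : Fin n => gfp y (x i) (l j + n - ((j : ℕ) + 1)))ᵀ * B := by
  refine ⟨Matrix.of fun k j => nodalWeight univ x k * gfp (fun t => y (t - (j : ℕ))) (x k) j,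
    fun l => ?_⟩
  ext i j
  have hq : ((j + (l i + n - (i + 1)) : ℕ) : ℤ) + 1 - n = l i + (j : ℕ) - (i : ℕ) := by
    have := i.isLt; push_cast [Nat.sub_sub, Nat.cast_sub (by omega : (i : ℕ) + 1 ≤ l i + n)]; ring
  rw [jacobiTrudiMatrix, Matrix.of_apply, ← hq, dhZ_eq_sum_nodalWeight_mul_gfp _ hx,
    Matrix.mul_apply]
  refine sum_congr rfl fun k _ => ?_
  rw [gfp_shift_add]
  simp only [Matrix.transpose_apply, Matrix.of_apply]
  ring

theorem jacobi_trudi_of_injective {n : ℕ} {x : Fin n → K} (hx : Function.Injective x)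
    (y : ℤ → K) (l : Fin n → ℕ) :
    dnum n x y l = (jacobiTrudiMatrix n x y l).det * dden n x y := by
  obtain ⟨B, hB⟩ := exists_jacobiTrudiMatrix_eq_transpose_mul hx y
  have hinv : dden n x y * B.det = 1 := by
    rw [← det_jacobiTrudiMatrix_zero n x y, hB, Matrix.det_mul, Matrix.det_transpose]
    rfl
  rw [hB, Matrix.det_mul, Matrix.det_transpose, dnum, mul_right_comm, mul_assoc, hinv, mul_one]

end Field

theorem jacobi_trudi_general {R : Type*} [CommRing R] (n : ℕ) (x : Fin n → R) (y : ℤ → R)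
    (l : Fin n → ℕ) :
    dnum n x y l =
      Matrix.det (Matrix.of fun i j : Fin n =>
          dhZ n ((l i : ℤ) + (j : ℕ) - (i : ℕ)) x (fun k => y (k - (j : ℕ)))) *
        dden n x y := by
  let A := MvPolynomial (Fin n ⊕ ℤ) ℤ
  let xA : Fin n → A := fun i => MvPolynomial.X (Sum.inl i)
  let yA : ℤ → A := fun k => MvPolynomial.X (Sum.inr k)
  have hA : dnum n xA yA l = (jacobiTrudiMatrix n xA yA l).det * dden n xA yA := by
    apply IsFractionRing.injective A (FractionRing A)
    rw [map_mul, map_dnum, map_det_jacobiTrudiMatrix, map_dden]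
    refine jacobi_trudi_of_injective (fun i j h => ?_) _ l
    exact Sum.inl_injective <|
      MvPolynomial.X_injective (IsFractionRing.injective A (FractionRing A) h)
  let φ : A →+* R := (MvPolynomial.aeval (Sum.elim x y)).toRingHom
  have hx : φ ∘ xA = x := funext fun i => MvPolynomial.aeval_X _ (Sum.inl i)
  have hy : φ ∘ yA = y := funext fun k => MvPolynomial.aeval_X _ (Sum.inr k)
  have := congrArg φ hA
  rwa [map_mul, map_dnum, map_det_jacobiTrudiMatrix, map_dden, hx, hy] at this

/-- generalized Jacobi–Trudi formula:
`^n s_λ(x_1,…,x_n|y) = det [h_{λ_i+j-i}(x_1,…,x_n | τ^{j-1} y)]_{i,j=1}^n`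
(written multiplicatively, with `(τ^m y)_k = y_{k-m}` and zero-based `i, j`). -/
theorem jacobi_trudi {R : Type*} [CommRing R] (n : ℕ) (x : Fin n → R) (y : ℤ → R)
    (l : Fin n → ℕ) (hl : Antitone l) :
    dnum n x y l =
      Matrix.det (Matrix.of fun i j : Fin n =>
          dhZ n ((l i : ℤ) + (j : ℕ) - (i : ℕ)) x (fun k => y (k - (j : ℕ)))) *
        dden n x y :=
  jacobi_trudi_general n x y l
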